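/- arXiv:2506.11626 — 7 statements merged into one kernel-verified Lean document; each statement's English description precedes it below -/
import Mathlib

section
/- If φ is a skew morphism of a finite group G (a permutation of G fixing the identity such that for each a ∈ G there is a non-negative integer i_a with φ(ab) = φ(a)·φ^{i_a}(b) for all b ∈ G), then the kernel ker φ = {a ∈ G : π_φ(a) = 1} is a subgroup of G, where π_φ is the power function of φ. -/
/-- A skew morphism of a finite group `G`: a permutation fixing the identity such that
for each `a` there is a non-negative integer `i_a` with `φ(ab) = φ(a) · φ^{i_a}(b)` for all `b`. -/
def IsSkewMorphism {G : Type*} [Group G] (φ : Equiv.Perm G) : Prop :=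
  φ 1 = 1 ∧ ∀ a : G, ∃ i : ℕ, ∀ b : G, φ (a * b) = φ a * (φ ^ i) b

/-- `π` is a power function for the skew morphism `φ`. -/
def IsPowerFunction {G : Type*} [Group G] (φ : Equiv.Perm G) (π : G → ℕ) : Prop :=
  φ 1 = 1 ∧ ∀ a b : G, φ (a * b) = φ a * (φ ^ (π a)) b

/-- The kernel `{a : π_φ(a) = 1}` (equivalently `{a : φ^{π_φ(a)} = φ}`) is a subgroup of `G`. -/
theorem kernel_is_subgroup {G : Type*} [Group G] [Fintype G] (φ : Equiv.Perm G)
    (π : G → ℕ) (hπ : IsPowerFunction φ π) :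
    ∃ H : Subgroup G, (H : Set G) = {a : G | φ ^ (π a) = φ} := by
  obtain ⟨h1, hmul⟩ := hπ
  have hone : φ ^ (π (1 : G)) = φ := by
    ext b
    have := hmul 1 b
    rw [one_mul, h1, one_mul] at this
    exact this.symm
  have hmc : ∀ a b : G, φ ^ (π a) = φ → φ ^ (π b) = φ → φ ^ (π (a * b)) = φ := by
    intro a b ha hb
    have hab : φ (a * b) = φ a * φ b := by
      rw [hmul a b, ha]
    ext c
    have e1 : φ a * φ b * (φ ^ π (a * b)) c = φ a * φ b * φ c := by
      rw [← hab, ← hmul (a * b) c, mul_assoc a b c, hmul a (b * c), ha, hmul b c, hb, hab, mul_assoc]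
    exact mul_left_cancel e1
  have hpowc : ∀ (a : G) (n : ℕ), φ ^ (π a) = φ → φ ^ (π (a ^ n)) = φ := by
    intro a n ha
    induction n with
    | zero => simpa using hone
    | succ k ih => rw [pow_succ]; exact hmc _ _ ih ha
  have hinv : ∀ a : G, φ ^ (π a) = φ → φ ^ (π a⁻¹) = φ := by
    intro a ha
    have hpos := orderOf_pos a
    have h : a ^ (orderOf a - 1) = a⁻¹ := by
      apply eq_inv_of_mul_eq_one_left
      rw [← pow_succ, Nat.sub_add_cancel hpos, pow_orderOf_eq_one]
    have := hpowc a (orderOf a - 1) ha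
    rwa [h] at this
  exact ⟨{ carrier := {a : G | φ ^ (π a) = φ},
           one_mem' := hone,
           mul_mem' := fun ha hb => hmc _ _ ha hb,
           inv_mem' := fun ha => hinv _ ha }, rfl⟩
end

section
/- Let φ be a skew morphism of a finite group G and let T be an orbit of the cyclic group ⟨φ⟩ acting on G. If T generates G, then ord(φ) = |T|. In particular, for G = Z_n, ord(φ) equals the smallest positive integer i with φ^i(1) = 1. -/
/-- A skew morphism of the cyclic group `Z_n` (additive notation). -/
def IsSkewMorphismAdd {n : ℕ} (φ : Equiv.Perm (ZMod n)) : Prop :=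
  φ 0 = 0 ∧ ∀ a : ZMod n, ∃ i : ℕ, ∀ b : ZMod n, φ (a + b) = φ a + (φ ^ i) b

section Aux

variable {G : Type*} [Group G]

/-- The power function of a skew morphism (a choice of exponents). -/
noncomputable def skPow (φ : Equiv.Perm G) (hφ : IsSkewMorphism φ) (a : G) : ℕ :=
  (hφ.2 a).choose

lemma skPow_spec (φ : Equiv.Perm G) (hφ : IsSkewMorphism φ) (a b : G) :
    φ (a * b) = φ a * (φ ^ skPow φ hφ a) b :=
  (hφ.2 a).choose_spec b

/-- Iterated power sums `σ(k, x)`. -/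
noncomputable def skSig (φ : Equiv.Perm G) (hφ : IsSkewMorphism φ) : ℕ → G → ℕ
  | 0, _ => 0
  | k + 1, x => skSig φ hφ k (φ x) + skPow φ hφ x

lemma skSig_spec (φ : Equiv.Perm G) (hφ : IsSkewMorphism φ) :
    ∀ (k : ℕ) (x y : G), (φ ^ k) (x * y) = (φ ^ k) x * (φ ^ skSig φ hφ k x) y := by
  intro k
  induction k with
  | zero => intro x y; simp [skSig]
  | succ k ih =>
    intro x y
    have h1 : (φ ^ (k + 1)) (x * y) = (φ ^ k) (φ (x * y)) := by
      rw [pow_succ]; rfl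
    rw [h1, skPow_spec φ hφ x y, ih (φ x) ((φ ^ skPow φ hφ x) y)]
    have h2 : (φ ^ k) (φ x) = (φ ^ (k + 1)) x := by rw [pow_succ]; rfl
    rw [h2]
    congr 1
    have : (φ ^ skSig φ hφ k (φ x)) ((φ ^ skPow φ hφ x) y)
        = (φ ^ (skSig φ hφ k (φ x) + skPow φ hφ x)) y := by
      rw [pow_add]; rfl
    rw [this]; rfl

lemma skSig_add (φ : Equiv.Perm G) (hφ : IsSkewMorphism φ) :
    ∀ (l k : ℕ) (x : G), skSig φ hφ (k + l) x = skSig φ hφ k ((φ ^ l) x) + skSig φ hφ l x := by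
  intro l
  induction l with
  | zero => intro k x; simp [skSig]
  | succ l ih =>
    intro k x
    have h1 : k + (l + 1) = (k + l) + 1 := by ring
    rw [h1]
    show skSig φ hφ (k + l) (φ x) + skPow φ hφ x = _
    rw [ih k (φ x)]
    have h2 : (φ ^ l) (φ x) = (φ ^ (l + 1)) x := by rw [pow_succ]; rfl
    rw [h2]
    show _ = skSig φ hφ k ((φ ^ (l+1)) x) + (skSig φ hφ l (φ x) + skPow φ hφ x)
    ring

lemma skSig_blocks (φ : Equiv.Perm G) (hφ : IsSkewMorphism φ) (t : ℕ) (x : G)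
    (hx : (φ ^ t) x = x) : ∀ r : ℕ, skSig φ hφ (r * t) x = r * skSig φ hφ t x := by
  intro r
  induction r with
  | zero => simp [skSig]
  | succ r ih =>
    have : (r + 1) * t = r * t + t := by ring
    rw [this, skSig_add φ hφ t (r * t) x, hx, ih]
    ring

omit [Group G] in
lemma pow_fix_of_fix (φ : Equiv.Perm G) (t : ℕ) (x : G) (hx : (φ ^ t) x = x) :
    ∀ r : ℕ, (φ ^ (r * t)) x = x := by
  intro r
  induction r with
  | zero => simp
  | succ r ih =>
    have h : (r + 1) * t = t + r * t := by ring
    rw [h, pow_add]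
    show (φ ^ t) ((φ ^ (r * t)) x) = x
    rw [ih, hx]

end Aux

/-- Key lemma: if an orbit of a skew morphism generates `G`, then the order of `φ`
is the least positive `i` with `φ^i a = a`, and it equals the orbit size. -/
theorem skew_key {G : Type} [Group G] [Fintype G] (φ : Equiv.Perm G)
    (hφ : IsSkewMorphism φ) (a : G)
    (hgen : Subgroup.closure (Set.range fun k : ℤ => (φ ^ k) a) = ⊤) :
    IsLeast {i : ℕ | 0 < i ∧ (φ ^ i) a = a} (orderOf φ) ∧
      orderOf φ = Set.ncard (Set.range fun k : ℤ => (φ ^ k) a) := by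
  classical
  set n := orderOf φ with hn
  have hnpos : 0 < n := orderOf_pos φ
  have hφn : φ ^ n = 1 := pow_orderOf_eq_one φ
  have hφna : (φ ^ n) a = a := by rw [hφn]; rfl
  -- t : minimal positive period of a
  have hex : ∃ i : ℕ, 0 < i ∧ (φ ^ i) a = a := ⟨n, hnpos, hφna⟩
  set t := Nat.find hex with htdef
  obtain ⟨htpos, hta⟩ := Nat.find_spec hex
  have htmin : ∀ i, 0 < i → (φ ^ i) a = a → t ≤ i := fun i h1 h2 => Nat.find_min' hex ⟨h1, h2⟩
  -- t divides n
  have htn : t ∣ n := by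
    have h1 : (φ ^ (n % t)) a = a := by
      have h2 : (φ ^ (n % t)) ((φ ^ (n / t * t)) a) = (φ ^ n) a := by
        rw [← Equiv.Perm.mul_apply, ← pow_add]
        rw [Nat.mod_add_div' n t]
      rw [pow_fix_of_fix φ t a hta (n / t), hφna] at h2
      exact h2
    by_contra h
    have hr : 0 < n % t := Nat.pos_of_ne_zero fun h0 => h (Nat.dvd_of_mod_eq_zero h0)
    have := htmin _ hr h1
    exact absurd (Nat.mod_lt n htpos) (not_lt.mpr this)
  -- n divides σ(n, x) for every x
  have hsig_n : ∀ x : G, n ∣ skSig φ hφ n x := by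
    intro x
    apply orderOf_dvd_of_pow_eq_one
    apply Equiv.ext
    intro y
    have h1 := skSig_spec φ hφ n x y
    rw [hφn] at h1
    simp only [Equiv.Perm.coe_one, id_eq] at h1
    have := mul_left_cancel h1.symm
    rw [this]; rfl
  -- the invariant set
  set S : Set G := {x | (φ ^ t) x = x ∧ t ∣ skSig φ hφ t x} with hS
  -- orbit elements are in S
  have horb : ∀ m : ℕ, (φ ^ m) a ∈ S := by
    intro m
    have hfix : (φ ^ t) ((φ ^ m) a) = (φ ^ m) a := by
      have hcomm : φ ^ t * φ ^ m = φ ^ m * φ ^ t := pow_mul_comm φ t m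
      calc (φ ^ t) ((φ ^ m) a) = (φ ^ t * φ ^ m) a := rfl
        _ = (φ ^ m * φ ^ t) a := by rw [hcomm]
        _ = (φ ^ m) ((φ ^ t) a) := rfl
        _ = (φ ^ m) a := by rw [hta]
    refine ⟨hfix, ?_⟩
    have hq : n / t * t = n := Nat.div_mul_cancel htn
    have hqpos : 0 < n / t := Nat.div_pos (Nat.le_of_dvd hnpos htn) htpos
    have hb := skSig_blocks φ hφ t ((φ ^ m) a) hfix (n / t)
    rw [hq] at hb
    have hdvd : n / t * t ∣ n / t * skSig φ hφ t ((φ ^ m) a) := by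
      rw [← hb, hq]; exact hsig_n _
    exact (Nat.mul_dvd_mul_iff_left hqpos).mp hdvd
  -- congruence for σ on products
  have hcongr : ∀ x y : G, φ ^ skSig φ hφ t (x * y) = φ ^ skSig φ hφ (skSig φ hφ t x) y := by
    intro x y
    apply Equiv.ext
    intro z
    have h1 := skSig_spec φ hφ t (x * y) z
    have h2 := skSig_spec φ hφ t x (y * z)
    have h3 := skSig_spec φ hφ (skSig φ hφ t x) y z
    rw [mul_assoc] at h1
    rw [h2, h3, skSig_spec φ hφ t x y, mul_assoc] at h1
    exact (mul_left_cancel (mul_left_cancel h1)).symm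
  -- S is closed under multiplication
  have hmul : ∀ x ∈ S, ∀ y ∈ S, x * y ∈ S := by
    rintro x ⟨hx1, hx2⟩ y ⟨hy1, hy2⟩
    obtain ⟨r, hr⟩ := hx2
    constructor
    · have h1 := skSig_spec φ hφ t x y
      rw [hx1, hr] at h1
      rw [h1, mul_comm t r, pow_fix_of_fix φ t y hy1 r]
    · have h2 : skSig φ hφ t (x * y) ≡ skSig φ hφ (skSig φ hφ t x) y [MOD n] :=
        pow_eq_pow_iff_modEq.mp (hcongr x y)
      have h3 : skSig φ hφ (skSig φ hφ t x) y = r * skSig φ hφ t y := by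
        rw [hr, mul_comm t r, skSig_blocks φ hφ t y hy1 r]
      have h4 : skSig φ hφ t (x * y) ≡ r * skSig φ hφ t y [MOD t] := by
        rw [← h3]
        exact Nat.ModEq.of_dvd htn h2
      have h5 : t ∣ r * skSig φ hφ t y := Dvd.dvd.mul_left hy2 r
      have := (Nat.modEq_zero_iff_dvd).mpr h5
      exact (Nat.modEq_zero_iff_dvd).mp (h4.trans this)
  -- 1 ∈ S
  have hone : (1 : G) ∈ S := by
    have hfix1 : ∀ k : ℕ, (φ ^ k) (1 : G) = 1 := by
      intro k
      induction k with
      | zero => rfl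
      | succ k ih =>
        rw [pow_succ]
        show (φ ^ k) (φ 1) = 1
        rw [hφ.1, ih]
    constructor
    · exact hfix1 t
    · have h1 : φ ^ t = φ ^ skSig φ hφ t (1 : G) := by
        apply Equiv.ext
        intro y
        have := skSig_spec φ hφ t 1 y
        rw [one_mul, hfix1 t, one_mul] at this
        exact this
      have h2 : t ≡ skSig φ hφ t (1 : G) [MOD n] := pow_eq_pow_iff_modEq.mp h1
      have h3 : t ≡ skSig φ hφ t (1 : G) [MOD t] := Nat.ModEq.of_dvd htn h2
      have h4 : (0 : ℕ) ≡ skSig φ hφ t (1 : G) [MOD t] :=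
        (Nat.modEq_zero_iff_dvd.mpr dvd_rfl).symm.trans h3
      exact Nat.modEq_zero_iff_dvd.mp h4.symm
  -- S contains inverses
  have hpowmem : ∀ x ∈ S, ∀ m : ℕ, 0 < m → x ^ m ∈ S := by
    intro x hx m hm
    induction m with
    | zero => exact absurd hm (lt_irrefl 0)
    | succ m ih =>
      rcases Nat.eq_zero_or_pos m with h0 | h0
      · subst h0; simpa using hx
      · have := ih h0
        rw [pow_succ]
        exact hmul _ this _ hx
  have hinv : ∀ x ∈ S, x⁻¹ ∈ S := by
    intro x hx
    rcases eq_or_ne x 1 with h1 | h1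
    · subst h1; simpa using hone
    · have hopos : 0 < orderOf x := orderOf_pos x
      have ho : 1 < orderOf x := by
        rcases Nat.lt_or_ge 1 (orderOf x) with h | h
        · exact h
        · exfalso
          apply h1
          have h2 : orderOf x = 1 := by omega
          exact orderOf_eq_one_iff.mp h2
      have hxo : x ^ (orderOf x - 1) = x⁻¹ := by
        apply eq_inv_of_mul_eq_one_right
        have h2 : x * x ^ (orderOf x - 1) = x ^ orderOf x := by
          rw [← pow_succ']
          congr 1
          omega
        rw [h2, pow_orderOf_eq_one]
      rw [← hxo]
      exact hpowmem x hx _ (by omega)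
  -- build the subgroup and conclude S = univ
  have hSall : ∀ x : G, x ∈ S := by
    have hH : Subgroup.closure (Set.range fun k : ℤ => (φ ^ k) a) ≤
        { carrier := S
          one_mem' := hone
          mul_mem' := fun {x y} hx hy => hmul x hx y hy
          inv_mem' := fun {x} hx => hinv x hx } := by
      apply Subgroup.closure_le _ |>.mpr
      rintro x ⟨k, rfl⟩
      have : ∃ m : ℕ, (φ ^ k : Equiv.Perm G) = φ ^ m := by
        refine ⟨(k % (n : ℤ)).toNat, ?_⟩
        have hnz : (n : ℤ) ≠ 0 := by exact_mod_cast hnpos.ne'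
        have h1 : φ ^ (k : ℤ) = φ ^ (k % (n : ℤ)) := by
          conv_lhs => rw [← Int.emod_add_mul_ediv k (n : ℤ)]
          rw [zpow_add, zpow_mul]
          have : (φ : Equiv.Perm G) ^ (n : ℤ) = 1 := by
            rw [zpow_natCast, hφn]
          rw [this, one_zpow, mul_one]
        rw [h1, ← zpow_natCast φ ((k % (n : ℤ)).toNat),
          Int.toNat_of_nonneg (Int.emod_nonneg k hnz)]
      obtain ⟨m, hm⟩ := this
      show (φ ^ k) a ∈ S
      rw [hm]
      exact horb m
    intro x
    have : x ∈ Subgroup.closure (Set.range fun k : ℤ => (φ ^ k) a) := by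
      rw [hgen]; trivial
    exact hH this
  -- hence φ^t = 1 and n = t
  have hφt : φ ^ t = 1 := by
    apply Equiv.ext
    intro x
    exact (hSall x).1
  have hnt : n = t := Nat.dvd_antisymm (orderOf_dvd_of_pow_eq_one hφt) htn
  constructor
  · exact ⟨⟨hnpos, hφna⟩, fun i hi => hnt ▸ htmin i hi.1 hi.2⟩
  -- cardinality of the orbit
  · have hset : (Set.range fun k : ℤ => (φ ^ k) a)
        = ↑((Finset.range t).image fun m : ℕ => (φ ^ m) a) := by
      apply Set.eq_of_subset_of_subset
      · rintro x ⟨k, rfl⟩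
        simp only [Finset.coe_image, Finset.coe_range, Set.mem_image, Set.mem_Iio]
        -- reduce zpow to a natural power < t
        have : ∃ m : ℕ, (φ ^ k : Equiv.Perm G) = φ ^ m := by
          refine ⟨(k % (n : ℤ)).toNat, ?_⟩
          have hnz : (n : ℤ) ≠ 0 := by exact_mod_cast hnpos.ne'
          have h1 : φ ^ (k : ℤ) = φ ^ (k % (n : ℤ)) := by
            conv_lhs => rw [← Int.emod_add_mul_ediv k (n : ℤ)]
            rw [zpow_add, zpow_mul]
            have : (φ : Equiv.Perm G) ^ (n : ℤ) = 1 := by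
              rw [zpow_natCast, hφn]
            rw [this, one_zpow, mul_one]
          rw [h1, ← zpow_natCast φ ((k % (n : ℤ)).toNat),
            Int.toNat_of_nonneg (Int.emod_nonneg k hnz)]
        obtain ⟨m, hm⟩ := this
        refine ⟨m % t, Nat.mod_lt m htpos, ?_⟩
        have : (φ ^ m) a = (φ ^ (m % t)) a := by
          conv_lhs => rw [← Nat.div_add_mod m t]
          rw [Nat.add_comm, pow_add]
          show (φ ^ (m % t)) ((φ ^ (t * (m / t))) a) = _
          rw [Nat.mul_comm, pow_fix_of_fix φ t a hta (m / t)]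
        rw [hm, this]
      · rintro x hx
        simp only [Finset.coe_image, Finset.coe_range, Set.mem_image, Set.mem_Iio] at hx
        obtain ⟨m, _, rfl⟩ := hx
        refine ⟨(m : ℤ), ?_⟩
        show (φ ^ (m : ℤ)) a = (φ ^ m) a
        rw [zpow_natCast]
    rw [hset, Set.ncard_coe_finset]
    have hkey : ∀ i j : ℕ, i < j → j < t → (φ ^ i) a = (φ ^ j) a → False := by
      intro i j hlt hj hij
      have h1 : (φ ^ (j - i)) a = a := by
        have hcomm : (φ ^ (j - i)) ((φ ^ i) a) = (φ ^ i) ((φ ^ (j - i)) a) := by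
          have hc : φ ^ (j - i) * φ ^ i = φ ^ i * φ ^ (j - i) := pow_mul_comm φ (j - i) i
          calc (φ ^ (j - i)) ((φ ^ i) a) = (φ ^ (j - i) * φ ^ i) a := rfl
            _ = (φ ^ i * φ ^ (j - i)) a := by rw [hc]
            _ = (φ ^ i) ((φ ^ (j - i)) a) := rfl
        have h2 : (φ ^ (j - i)) ((φ ^ i) a) = (φ ^ i) a := by
          calc (φ ^ (j - i)) ((φ ^ i) a) = (φ ^ ((j - i) + i)) a := by rw [pow_add]; rfl
            _ = (φ ^ j) a := by rw [Nat.sub_add_cancel (le_of_lt hlt)]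
            _ = (φ ^ i) a := hij.symm
        rw [hcomm] at h2
        exact (φ ^ i).injective h2
      have := htmin (j - i) (by omega) h1
      omega
    have hinj : Set.InjOn (fun m : ℕ => (φ ^ m) a) ↑(Finset.range t) := by
      intro i hi j hj hij
      simp only [Finset.coe_range, Set.mem_Iio] at hi hj
      rcases Nat.lt_trichotomy i j with h | h | h
      · exact absurd hij (fun hh => hkey i j h hj hh)
      · exact h
      · exact absurd hij.symm (fun hh => hkey j i h hi hh)
    rw [Finset.card_image_of_injOn hinj, Finset.card_range]
    exact hnt

/-- If an orbit `T` of `⟨φ⟩` generates `G`, then `ord(φ) = |T|`; in particular for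
`G = Z_n` the order of `φ` is the least positive `i` with `φ^i(1) = 1`. -/
theorem orderOf_eq_orbit_card :
    (∀ (G : Type) [Group G] [Fintype G] (φ : Equiv.Perm G), IsSkewMorphism φ →
      ∀ a : G, Subgroup.closure (Set.range fun k : ℤ => (φ ^ k) a) = ⊤ →
        orderOf φ = Set.ncard (Set.range fun k : ℤ => (φ ^ k) a)) ∧
    (∀ (n : ℕ), 0 < n → ∀ φ : Equiv.Perm (ZMod n), IsSkewMorphismAdd φ →
      IsLeast {i : ℕ | 0 < i ∧ (φ ^ i) (1 : ZMod n) = 1} (orderOf φ)) := by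
  constructor
  · intro G _ _ φ hφ a hgen
    exact (skew_key φ hφ a hgen).2
  · intro n hn φ hφ
    haveI : NeZero n := ⟨hn.ne'⟩
    let G := Multiplicative (ZMod n)
    let φ' : Equiv.Perm G := φ
    have hφ' : IsSkewMorphism φ' := hφ
    let a : G := Multiplicative.ofAdd (1 : ZMod n)
    have hgen : Subgroup.closure (Set.range fun k : ℤ => (φ' ^ k) a) = ⊤ := by
      rw [eq_top_iff]
      intro x _
      have ha : a ∈ Subgroup.closure (Set.range fun k : ℤ => (φ' ^ k) a) := by
        apply Subgroup.subset_closure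
        refine ⟨(0 : ℤ), ?_⟩
        show (φ' ^ (0 : ℤ)) a = a
        rw [zpow_zero]
        rfl
      have hx : x ∈ Subgroup.zpowers a := by
        refine ⟨((Multiplicative.toAdd x).val : ℤ), ?_⟩
        apply Multiplicative.toAdd.injective
        rw [toAdd_zpow]
        show ((Multiplicative.toAdd x).val : ℤ) • (1 : ZMod n) = Multiplicative.toAdd x
        rw [zsmul_eq_mul, mul_one]
        push_cast
        exact ZMod.natCast_rightInverse (Multiplicative.toAdd x)
      exact (Subgroup.zpowers_le.mpr ha) hx
    have key := (skew_key φ' hφ' a hgen).1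
    exact key
end

section
/- Let φ be a skew morphism of a finite group G and let i be a positive integer. Then φ^i is a skew morphism of G if and only if for every a ∈ G there exists x_a ∈ Z_{ord(φ)} such that σ_φ(i,a) ≡ i·x_a (mod ord(φ)). Moreover, when φ^i is a skew morphism, π_{φ^i}(a) is the smallest positive solution x_a of this congruence. -/
lemma pow_apply_one {G : Type*} [Group G] (φ : Equiv.Perm G) (h : φ 1 = 1) (i : ℕ) :
    (φ ^ i) 1 = 1 := by
  induction i with
  | zero => rfl
  | succ n ih => rw [pow_succ, Equiv.Perm.mul_apply, h, ih]

lemma pow_mul_apply_aux {G : Type*} [Group G] (φ : Equiv.Perm G) (π : G → ℕ)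
    (hπ : IsPowerFunction φ π) (i : ℕ) (a b : G) :
    (φ ^ i) (a * b) = (φ ^ i) a * (φ ^ (∑ j ∈ Finset.range i, π ((φ ^ j) a))) b := by
  induction i with
  | zero => simp
  | succ n ih =>
    rw [Finset.sum_range_succ, pow_succ', Equiv.Perm.mul_apply, ih, hπ.2,
      add_comm, pow_add, Equiv.Perm.mul_apply, Equiv.Perm.mul_apply]

/-- `φ^i` is a skew morphism iff for every `a` there is `x_a` with
`σ_φ(i,a) ≡ i·x_a (mod ord φ)`; moreover when `φ^i` is a skew morphism its power
function is given by the smallest positive solution `x_a`. -/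
theorem pow_isSkewMorphism_iff {G : Type*} [Group G] [Fintype G] (φ : Equiv.Perm G)
    (π : G → ℕ) (hπ : IsPowerFunction φ π) (i : ℕ) (hi : 0 < i) :
    (IsSkewMorphism (φ ^ i) ↔
      ∀ a : G, ∃ x : ℕ, Nat.ModEq (orderOf φ) (∑ j ∈ Finset.range i, π ((φ ^ j) a)) (i * x)) ∧
    (IsSkewMorphism (φ ^ i) → IsPowerFunction (φ ^ i) (fun a =>
      sInf {x : ℕ | 0 < x ∧
        Nat.ModEq (orderOf φ) (∑ j ∈ Finset.range i, π ((φ ^ j) a)) (i * x)})) := by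
  have hfin : Finite (Equiv.Perm G) := by infer_instance
  have hord : 0 < orderOf φ := orderOf_pos φ
  have key : ∀ a b : G,
      (φ ^ i) (a * b) = (φ ^ i) a * (φ ^ (∑ j ∈ Finset.range i, π ((φ ^ j) a))) b :=
    pow_mul_apply_aux φ π hπ i
  have h1 : (φ ^ i) 1 = 1 := pow_apply_one φ hπ.1 i
  have fwd : IsSkewMorphism (φ ^ i) →
      ∀ a : G, ∃ x : ℕ,
        Nat.ModEq (orderOf φ) (∑ j ∈ Finset.range i, π ((φ ^ j) a)) (i * x) := by
    intro h a
    obtain ⟨k, hk⟩ := h.2 a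
    refine ⟨k, ?_⟩
    rw [← pow_eq_pow_iff_modEq]
    ext b
    have := (hk b).symm.trans (key a b)
    rw [← pow_mul] at this
    exact (mul_left_cancel this).symm
  refine ⟨⟨fwd, ?_⟩, ?_⟩
  · intro h
    refine ⟨h1, fun a => ?_⟩
    obtain ⟨x, hx⟩ := h a
    refine ⟨x, fun b => ?_⟩
    rw [key a b, ← pow_mul, (pow_eq_pow_iff_modEq.mpr hx : _)]
  · intro h
    refine ⟨h1, fun a b => ?_⟩
    obtain ⟨x, hx⟩ := fwd h a
    have hmem : (x + orderOf φ) ∈ {x : ℕ | 0 < x ∧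
        Nat.ModEq (orderOf φ) (∑ j ∈ Finset.range i, π ((φ ^ j) a)) (i * x)} := by
      refine ⟨by omega, hx.trans ?_⟩
      simp [Nat.ModEq, Nat.mul_add, Nat.add_mul_mod_self_right]
    have hInf := Nat.sInf_mem ⟨x + orderOf φ, hmem⟩
    rw [key a b, ← pow_mul, (pow_eq_pow_iff_modEq.mpr hInf.2 : _)]
end

section
/- Let φ be a skew morphism of Z_n with kernel ker φ and let k = n/|ker φ|. Then the map φ*: Z_k → Z_k given by φ*(a) = φ(a) mod k is a well-defined skew morphism of Z_k ≅ Z_n/(ker φ). -/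
/-- In a finite cyclic group `ZMod n`, any set containing `0` and closed under addition
is (the coercion of) an additive subgroup. -/
lemma exists_addSubgroup_of_closed {n : ℕ} (hn : 0 < n) (S : Set (ZMod n))
    (h0 : (0 : ZMod n) ∈ S) (hadd : ∀ a ∈ S, ∀ b ∈ S, a + b ∈ S) :
    ∃ H : AddSubgroup (ZMod n), (H : Set (ZMod n)) = S := by
  have hns : ∀ (j : ℕ), ∀ a ∈ S, j • a ∈ S := by
    intro j
    induction j with
    | zero => intro a _; simpa using h0
    | succ j ih =>
      intro a ha
      rw [succ_nsmul]
      exact hadd _ (ih a ha) _ ha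
  refine ⟨{ carrier := S, zero_mem' := h0,
            add_mem' := fun ha hb => hadd _ ha _ hb, neg_mem' := ?_ }, rfl⟩
  intro a ha
  have hna : n • a = 0 := by
    rw [nsmul_eq_mul, ZMod.natCast_self, zero_mul]
  have h1 : (n - 1) • a + a = 0 := by
    rw [← succ_nsmul, Nat.sub_add_cancel hn, hna]
  have h2 : -a = (n - 1) • a := neg_eq_of_add_eq_zero_left h1
  show -a ∈ S
  rw [h2]
  exact hns _ _ ha

/-- With `k = n / |ker φ|` (the kernel being the set of elements on which `φ` acts as a
homomorphism), the map `φ* : Z_k → Z_k`, `a ↦ φ(a) mod k`, is a well-defined skew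
morphism of `Z_k ≅ Z_n/(ker φ)`. -/
theorem quotient_skew_morphism (n k : ℕ) (hn : 0 < n) (φ : Equiv.Perm (ZMod n))
    (hskew : IsSkewMorphismAdd φ)
    (hk : k = n / Nat.card {a : ZMod n // ∀ b : ZMod n, φ (a + b) = φ a + φ b}) :
    ∃ ψ : Equiv.Perm (ZMod k), IsSkewMorphismAdd ψ ∧
      ∀ a : ℕ, ψ (a : ZMod k) = ((φ (a : ZMod n)).val : ZMod k) := by
  haveI : NeZero n := ⟨hn.ne'⟩
  obtain ⟨h0, hsk⟩ := hskew
  -- the kernel as a set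
  set K : Set (ZMod n) := {a : ZMod n | ∀ b : ZMod n, φ (a + b) = φ a + φ b} with hKdef
  set m : ℕ := Nat.card {a : ZMod n // ∀ b : ZMod n, φ (a + b) = φ a + φ b} with hmdef
  have hK0 : (0 : ZMod n) ∈ K := by
    intro b; rw [zero_add, h0, zero_add]
  have hKadd : ∀ a ∈ K, ∀ b ∈ K, a + b ∈ K := by
    intro a ha b hb c
    rw [add_assoc, ha (b + c), hb c, ha b, add_assoc]
  obtain ⟨HK, hHK⟩ := exists_addSubgroup_of_closed hn K hK0 hKadd
  have hmem : ∀ a : ZMod n, a ∈ HK ↔ a ∈ K := by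
    intro a; rw [← SetLike.mem_coe, hHK]
  have hcardK : Nat.card HK = m := by
    rw [hmdef]
    exact Nat.card_congr (Equiv.subtypeEquivRight (fun x => hmem x))
  have hm0 : 0 < m := by
    haveI : Nonempty {a : ZMod n // ∀ b : ZMod n, φ (a + b) = φ a + φ b} := ⟨⟨0, hK0⟩⟩
    rw [hmdef]
    exact Nat.card_pos
  have hmdvd : m ∣ n := by
    have := AddSubgroup.card_addSubgroup_dvd_card HK
    rwa [hcardK, Nat.card_zmod] at this
  have kmn : k * m = n := by rw [hk]; exact Nat.div_mul_cancel hmdvd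
  have hk0 : 0 < k := by
    rcases Nat.eq_zero_or_pos k with h | h
    · rw [h, zero_mul] at kmn; omega
    · exact h
  haveI : NeZero k := ⟨hk0.ne'⟩
  have hdvdkn : k ∣ n := ⟨m, kmn.symm⟩
  -- any subgroup of card m is contained in S = {a | k ∣ a.val}
  have hsub : ∀ H : AddSubgroup (ZMod n), Nat.card H = m → ∀ a ∈ H, k ∣ a.val := by
    intro H hH a ha
    have h1 : m • (⟨a, ha⟩ : H) = 0 := by
      rw [← hH]; exact card_nsmul_eq_zero'
    have h2 : m • a = 0 := by
      have := congrArg (Subtype.val) h1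
      simpa using this
    have h3 : ((m * a.val : ℕ) : ZMod n) = 0 := by
      push_cast [ZMod.natCast_val, ZMod.cast_id]
      rw [← nsmul_eq_mul]
      exact h2
    have h4 : n ∣ m * a.val := (ZMod.natCast_eq_zero_iff _ _).mp h3
    have h4' : m * k ∣ m * a.val := by rw [mul_comm m k, kmn]; exact h4
    exact (Nat.mul_dvd_mul_iff_left hm0).mp h4'
  -- card of S is at most m
  have hScard : Nat.card {a : ZMod n // k ∣ a.val} ≤ m := by
    have hinj : Function.Injective
        (fun a : {a : ZMod n // k ∣ a.val} =>
          (⟨a.1.val / k, by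
            rw [Nat.div_lt_iff_lt_mul hk0, mul_comm m k, kmn]
            exact ZMod.val_lt a.1⟩ : Fin m)) := by
      intro a b h
      have h' : a.1.val / k = b.1.val / k := congrArg Fin.val h
      have ha : k * (a.1.val / k) = a.1.val := Nat.mul_div_cancel' a.2
      have hb : k * (b.1.val / k) = b.1.val := Nat.mul_div_cancel' b.2
      have : a.1.val = b.1.val := by rw [← ha, ← hb, h']
      exact Subtype.ext (ZMod.val_injective n this)
    calc Nat.card {a : ZMod n // k ∣ a.val} ≤ Nat.card (Fin m) :=
          Nat.card_le_card_of_injective _ hinj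
      _ = m := by simp
  -- K = S
  have hKS : K ⊆ {a : ZMod n | k ∣ a.val} := by
    intro a ha
    exact hsub HK hcardK a ((hmem a).mpr ha)
  have hKncard : K.ncard = m := by
    rw [← Nat.card_coe_set_eq, hmdef]
    rfl
  have hKSeq : K = {a : ZMod n | k ∣ a.val} := by
    apply Set.eq_of_subset_of_ncard_le hKS _ (Set.toFinite _)
    rw [hKncard, ← Nat.card_coe_set_eq]
    exact hScard
  -- image of K under φ
  have h0' : (0 : ZMod n) ∈ φ '' K := ⟨0, hK0, h0⟩
  have hadd' : ∀ x ∈ φ '' K, ∀ y ∈ φ '' K, x + y ∈ φ '' K := by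
    rintro _ ⟨a, ha, rfl⟩ _ ⟨b, hb, rfl⟩
    exact ⟨a + b, hKadd a ha b hb, ha b⟩
  obtain ⟨HK', hHK'⟩ := exists_addSubgroup_of_closed hn (φ '' K) h0' hadd'
  have hcardK' : Nat.card HK' = m := by
    have he : Nat.card HK' = Nat.card (φ '' K : Set (ZMod n)) :=
      Nat.card_congr (Equiv.subtypeEquivRight (fun x => by rw [← SetLike.mem_coe, hHK']))
    rw [he, Nat.card_coe_set_eq, Set.ncard_image_of_injective _ φ.injective, hKncard]
  have hphiK : ∀ a ∈ K, φ a ∈ K := by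
    intro a ha
    rw [hKSeq]
    exact hsub HK' hcardK' (φ a) (by rw [← SetLike.mem_coe, hHK']; exact ⟨a, ha, rfl⟩)
  have himgeq : φ '' K = K := by
    apply Set.eq_of_subset_of_ncard_le _ _ (Set.toFinite _)
    · rintro _ ⟨a, ha, rfl⟩; exact hphiK a ha
    · rw [Set.ncard_image_of_injective _ φ.injective]
  -- the quotient map
  set ρ : ZMod n →+* ZMod k := ZMod.castHom hdvdkn (ZMod k) with hρ
  have hval : ∀ x : ZMod n, ρ x = (x.val : ZMod k) := by
    intro x
    rw [hρ, ZMod.castHom_apply, ← ZMod.natCast_val]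
  have hSmem : ∀ x : ZMod n, x ∈ K ↔ ρ x = 0 := by
    intro x
    rw [hKSeq, hval]
    exact ⟨fun h => (ZMod.natCast_eq_zero_iff _ _).mpr h,
      fun h => (ZMod.natCast_eq_zero_iff _ _).mp h⟩
  have hcongr : ∀ x y : ZMod n, ρ x = ρ y → ρ (φ x) = ρ (φ y) := by
    intro x y h
    have hc : (y - x) ∈ K := by
      rw [hSmem, map_sub, h, sub_self]
    have h2 : φ y = φ (y - x) + φ x := by
      have := hc x
      rwa [sub_add_cancel] at this
    rw [h2, map_add, (hSmem _).mp (hphiK _ hc), zero_add]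
  have hρval : ∀ a : ZMod k, ρ ((a.val : ℕ) : ZMod n) = a := by
    intro a
    rw [map_natCast, ZMod.natCast_zmod_val]
  -- the quotient skew morphism (as a function)
  set f : ZMod k → ZMod k := fun a => ρ (φ ((a.val : ℕ) : ZMod n)) with hf
  have F2 : ∀ x : ZMod n, f (ρ x) = ρ (φ x) := by
    intro x
    exact hcongr _ _ (hρval (ρ x))
  have finj : Function.Injective f := by
    intro a b h
    have hx : ρ ((a.val : ℕ) : ZMod n) = a := hρval a
    have hy : ρ ((b.val : ℕ) : ZMod n) = b := hρval b
    set x : ZMod n := ((a.val : ℕ) : ZMod n)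
    set y : ZMod n := ((b.val : ℕ) : ZMod n)
    have h' : ρ (φ x) = ρ (φ y) := h
    have h1 : φ x - φ y ∈ φ '' K := by
      rw [himgeq, hSmem, map_sub, h', sub_self]
    obtain ⟨c, hc, hcc⟩ := h1
    have h3 : φ (c + y) = φ x := by
      rw [hc y, hcc, sub_add_cancel]
    have h4 : c + y = x := φ.injective h3
    have h5 : ρ x = ρ y := by
      rw [← h4, map_add, (hSmem c).mp hc, zero_add]
    rw [← hx, ← hy, h5]
  have fbij : Function.Bijective f := Finite.injective_iff_bijective.mp finj
  set ψ : Equiv.Perm (ZMod k) := Equiv.ofBijective f fbij with hψ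
  have hψapp : ∀ a : ZMod k, ψ a = f a := fun a => rfl
  have hiter : ∀ (i : ℕ) (x : ZMod n), (ψ ^ i) (ρ x) = ρ ((φ ^ i) x) := by
    intro i
    induction i with
    | zero => intro x; simp
    | succ i ih =>
      intro x
      rw [pow_succ' ψ i, pow_succ' φ i, Equiv.Perm.mul_apply, Equiv.Perm.mul_apply,
        ih x, hψapp, F2]
  refine ⟨ψ, ⟨?_, ?_⟩, ?_⟩
  · show ψ 0 = 0
    rw [hψapp 0]
    show ρ (φ (((0 : ZMod k).val : ℕ) : ZMod n)) = 0
    rw [ZMod.val_zero, Nat.cast_zero, h0, map_zero]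
  · intro a
    obtain ⟨i, hi⟩ := hsk ((a.val : ℕ) : ZMod n)
    refine ⟨i, fun b => ?_⟩
    have hx : ρ ((a.val : ℕ) : ZMod n) = a := hρval a
    have hy : ρ ((b.val : ℕ) : ZMod n) = b := hρval b
    set x : ZMod n := ((a.val : ℕ) : ZMod n)
    set y : ZMod n := ((b.val : ℕ) : ZMod n)
    calc ψ (a + b) = f (ρ (x + y)) := by rw [hψapp, map_add ρ x y, hx, hy]
      _ = ρ (φ (x + y)) := F2 _
      _ = ρ (φ x + (φ ^ i) y) := by rw [hi y]
      _ = ρ (φ x) + ρ ((φ ^ i) y) := map_add ρ _ _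
      _ = ψ a + (ψ ^ i) b := by rw [← F2, hx, ← hiter i y, hy, hψapp a]
  · intro a
    have h1 : (a : ZMod k) = ρ ((a : ZMod n)) := (map_natCast ρ a).symm
    rw [h1, hψapp, F2, hval]
end

section
/- If φ is a skew morphism of Z_n, then the map φ′: Z_{ord(φ)} → Z_{ord(φ)} defined by φ′(a) = σ_φ(a,1) is a well-defined skew morphism of Z_{ord(φ)}, called the derived skew morphism. -/
/-- `π` is a power function for the skew morphism `φ` of `Z_n`. -/
def IsPowerFunctionAdd {n : ℕ} (φ : Equiv.Perm (ZMod n)) (π : ZMod n → ℕ) : Prop :=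
  φ 0 = 0 ∧ ∀ a b : ZMod n, φ (a + b) = φ a + (φ ^ (π a)) b

/-- The derived map `φ′ : Z_{ord(φ)} → Z_{ord(φ)}`, `a ↦ σ_φ(a,1) = Σ_{i<a} π(φ^i(1))`,
is a well-defined skew morphism of `Z_{ord(φ)}`. -/
theorem derived_skew_morphism (n : ℕ) (hn : 0 < n) (φ : Equiv.Perm (ZMod n))
    (π : ZMod n → ℕ) (hπ : IsPowerFunctionAdd φ π) :
    ∃ ψ : Equiv.Perm (ZMod (orderOf φ)), IsSkewMorphismAdd ψ ∧
      ∀ a : ℕ, ψ (a : ZMod (orderOf φ)) =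
        ((∑ i ∈ Finset.range a, π ((φ ^ i) 1) : ℕ) : ZMod (orderOf φ)) := by
  haveI : NeZero n := ⟨hn.ne'⟩
  obtain ⟨h0, hadd⟩ := hπ
  have hm : 0 < orderOf φ := orderOf_pos φ
  haveI : NeZero (orderOf φ) := ⟨hm.ne'⟩
  set m := orderOf φ with hmdef
  set S : ℕ → ℕ := fun a => ∑ i ∈ Finset.range a, π ((φ ^ i) 1) with hS
  have hpow0 : ∀ j : ℕ, (φ ^ j) 0 = 0 := by
    intro j
    induction j with
    | zero => rfl
    | succ j ih => rw [pow_succ, Equiv.Perm.mul_apply, h0]; exact ih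
  -- key identity: φ^x (1 + b) = φ^x 1 + φ^(S x) b
  have star : ∀ (x : ℕ) (b : ZMod n), (φ ^ x) (1 + b) = (φ ^ x) 1 + (φ ^ S x) b := by
    intro x
    induction x with
    | zero => intro b; simp [hS]
    | succ x ih =>
      intro b
      have hS1 : S (x + 1) = S x + π ((φ ^ x) 1) := by
        simp [hS, Finset.sum_range_succ]
      rw [pow_succ', Equiv.Perm.mul_apply, ih, hadd, Equiv.Perm.mul_apply]
      congr 1
      rw [hS1, ← Equiv.Perm.mul_apply, ← pow_add, add_comm (S x)]
  -- S is well-defined mod m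
  have hmod : ∀ x y : ℕ, x ≡ y [MOD m] → ((S x : ZMod m) = (S y : ZMod m)) := by
    intro x y hxy
    have hpow : (φ ^ x) = φ ^ y := pow_eq_pow_iff_modEq.mpr hxy
    have h1 : ∀ b : ZMod n, (φ ^ S x) b = (φ ^ S y) b := by
      intro b
      have e1 := star x b
      have e2 := star y b
      rw [hpow] at e1
      exact add_left_cancel (e1.symm.trans e2)
    have h2 : (φ ^ S x) = φ ^ S y := Equiv.ext h1
    exact (ZMod.natCast_eq_natCast_iff _ _ _).mpr (pow_eq_pow_iff_modEq.mp h2)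
  set Φ : ZMod m → Equiv.Perm (ZMod n) := fun e => φ ^ (ZMod.val e) with hΦ
  have hΦcast : ∀ t : ℕ, Φ ((t : ℕ) : ZMod m) = φ ^ t := by
    intro t
    simp only [hΦ]
    exact pow_eq_pow_iff_modEq.mpr (by rw [ZMod.val_natCast]; exact Nat.mod_modEq t m)
  have hΦinj : Function.Injective Φ := by
    intro u v huv
    simp only [hΦ] at huv
    have h1 := pow_eq_pow_iff_modEq.mp huv
    have h2 := (ZMod.natCast_eq_natCast_iff _ _ _).mpr h1
    rwa [ZMod.natCast_val, ZMod.natCast_val, ZMod.cast_id, ZMod.cast_id] at h2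
  have hΦadd : ∀ u v : ZMod m, Φ (u + v) = Φ u * Φ v := by
    intro u v
    simp only [hΦ]
    rw [← pow_add]
    refine pow_eq_pow_iff_modEq.mpr ?_
    rw [ZMod.val_add]
    exact Nat.mod_modEq _ m
  have hΦ0 : ∀ e : ZMod m, Φ e 0 = 0 := fun e => hpow0 _
  set f : ZMod m → ZMod m := fun e => ((S (ZMod.val e) : ℕ) : ZMod m) with hf
  have hfcast : ∀ t : ℕ, f ((t : ℕ) : ZMod m) = ((S t : ℕ) : ZMod m) := by
    intro t
    simp only [hf]
    exact hmod _ _ (by rw [ZMod.val_natCast]; exact Nat.mod_modEq t m)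
  have master : ∀ (e : ZMod m) (c : ZMod n), Φ e (1 + c) = Φ e 1 + Φ (f e) c := by
    intro e c
    have h1 : Φ (f e) = φ ^ S (ZMod.val e) := hΦcast _
    rw [h1]
    exact star (ZMod.val e) c
  -- generalized identity
  have lemB : ∀ (k : ℕ) (e : ZMod m) (c : ZMod n),
      Φ e ((k : ZMod n) + c) = Φ e (k : ZMod n) + Φ (f^[k] e) c := by
    intro k
    induction k with
    | zero => intro e c; simp [hΦ0]
    | succ k ih =>
      intro e c
      have h1 : ((k + 1 : ℕ) : ZMod n) + c = (k : ZMod n) + (1 + c) := by push_cast; ring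
      have h2 : ((k + 1 : ℕ) : ZMod n) = (k : ZMod n) + 1 := by push_cast; ring
      rw [h1, ih, master, Function.iterate_succ_apply', h2, ih e 1, add_assoc]
  -- the skew-morphism law for f
  have key : ∀ a b : ZMod m, f (a + b) = f a + f^[(ZMod.val (Φ a 1))] b := by
    intro a b
    set k : ℕ := ZMod.val (Φ a 1) with hk
    have hkc : ((k : ℕ) : ZMod n) = Φ a 1 := by
      rw [hk, ZMod.natCast_val, ZMod.cast_id]
    apply hΦinj
    have h1 : ∀ c : ZMod n, Φ (f (a + b)) c = Φ (f a + f^[k] b) c := by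
      intro c
      have e1 : Φ (a + b) (1 + c) = Φ (a + b) 1 + Φ (f (a + b)) c := master _ _
      have e2 : Φ (a + b) (1 + c) = Φ (a + b) 1 + Φ (f a + f^[k] b) c := by
        have hab : Φ (a + b) = Φ b * Φ a := by rw [add_comm]; exact hΦadd b a
        rw [hab, Equiv.Perm.mul_apply, master a c, ← hkc, lemB k b, add_comm (f a), hΦadd,
          Equiv.Perm.mul_apply]
        congr 1
        rw [hkc]
      exact add_left_cancel (e1.symm.trans e2)
    exact Equiv.ext h1
  -- injectivity of f
  have hfinj : Function.Injective f := by
    intro u v huv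
    apply hΦinj
    have h1 : Φ u 1 = Φ v 1 := by
      have e1 := master u (-1)
      have e2 := master v (-1)
      rw [add_neg_cancel, hΦ0] at e1 e2
      rw [huv] at e1
      have := e1.symm.trans e2
      exact add_right_cancel this
    apply Equiv.ext
    intro x
    have e1 := master u (x - 1)
    have e2 := master v (x - 1)
    rw [add_sub_cancel] at e1 e2
    rw [e1, e2, h1, huv]
  have hbij : Function.Bijective f := Finite.injective_iff_bijective.mp hfinj
  refine ⟨Equiv.ofBijective f hbij, ⟨?_, ?_⟩, ?_⟩
  · show f 0 = 0
    have : f ((0 : ℕ) : ZMod m) = ((S 0 : ℕ) : ZMod m) := hfcast 0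
    simpa [hS] using this
  · intro a
    refine ⟨ZMod.val (Φ a 1), ?_⟩
    intro b
    have hpowψ : ∀ (i : ℕ) (b : ZMod m), ((Equiv.ofBijective f hbij) ^ i) b = f^[i] b := by
      intro i
      induction i with
      | zero => intro b; rfl
      | succ i ih =>
        intro b
        rw [pow_succ, Equiv.Perm.mul_apply, Function.iterate_succ_apply]
        exact ih _
    rw [hpowψ]
    exact key a b
  · intro a
    show f ((a : ℕ) : ZMod m) = _
    rw [hfcast a]
end

section
/- Let φ be a non-trivial skew morphism of Z_n with derived skew morphism φ′. Then (φ′)^b(a) = σ_φ(a,b) for all a,b, and π_φ(i) = (φ′)^i(1) for all i; in particular ord(φ′) = n/|ker φ|. -/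
section Aux
variable {n : ℕ} {φ : Equiv.Perm (ZMod n)} {π : ZMod n → ℕ}

lemma pf_zero (hπ : IsPowerFunctionAdd φ π) (k : ℕ) : (φ ^ k) (0 : ZMod n) = 0 := by
  induction k with
  | zero => rfl
  | succ k ih => rw [pow_succ', Equiv.Perm.mul_apply, ih, hπ.1]

lemma pf_pow (hπ : IsPowerFunctionAdd φ π) (k : ℕ) (a b : ZMod n) :
    (φ ^ k) (a + b) = (φ ^ k) a + (φ ^ (∑ i ∈ Finset.range k, π ((φ ^ i) a))) b := by
  induction k with
  | zero => simp
  | succ k ih =>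
      have h1 : (φ ^ (k+1)) (a+b) = φ ((φ ^ k) (a+b)) := by
        rw [pow_succ', Equiv.Perm.mul_apply]
      rw [h1, ih, hπ.2, Finset.sum_range_succ]
      congr 1
      · rw [pow_succ', Equiv.Perm.mul_apply]
      · rw [add_comm (∑ i ∈ Finset.range k, π ((φ ^ i) a)) (π ((φ ^ k) a)), pow_add,
          Equiv.Perm.mul_apply]

lemma pf_pi0 (hπ : IsPowerFunctionAdd φ π) : φ ^ (π 0) = φ := by
  ext b
  have h := hπ.2 0 b
  rw [zero_add, hπ.1, zero_add] at h
  exact h.symm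

lemma pf_pi0_cast (hπ : IsPowerFunctionAdd φ π) :
    ((π (0 : ZMod n) : ℕ) : ZMod (orderOf φ)) = 1 := by
  have h : φ ^ (π 0) = φ ^ 1 := by rw [pf_pi0 hπ, pow_one]
  have := (ZMod.natCast_eq_natCast_iff _ _ _).mpr (pow_eq_pow_iff_modEq.mp h)
  simpa using this

lemma pf_sigma_assoc (hπ : IsPowerFunctionAdd φ π) (x : ℕ) (y z : ZMod n) :
    ((∑ i ∈ Finset.range x, π ((φ ^ i) (y + z)) : ℕ) : ZMod (orderOf φ)) =
    ((∑ i ∈ Finset.range (∑ i ∈ Finset.range x, π ((φ ^ i) y)), π ((φ ^ i) z) : ℕ) :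
      ZMod (orderOf φ)) := by
  apply (ZMod.natCast_eq_natCast_iff _ _ _).mpr
  apply pow_eq_pow_iff_modEq.mp
  ext w
  have h1 := pf_pow hπ x (y + z) w
  have h2 := pf_pow hπ x y (z + w)
  have h3 := pf_pow hπ (∑ i ∈ Finset.range x, π ((φ ^ i) y)) z w
  have h4 := pf_pow hπ x y z
  rw [h3, ← add_assoc ((φ ^ x) y), ← h4, ← add_assoc y z w] at h2
  exact add_left_cancel (h1.symm.trans h2)


lemma pf_claim1 (hπ : IsPowerFunctionAdd φ π) (ψ : Equiv.Perm (ZMod (orderOf φ)))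
    (hψ : ∀ a : ℕ, ψ (a : ZMod (orderOf φ)) =
      ((∑ i ∈ Finset.range a, π ((φ ^ i) 1) : ℕ) : ZMod (orderOf φ))) :
    ∀ b a : ℕ, (ψ ^ b) (a : ZMod (orderOf φ)) =
      ((∑ i ∈ Finset.range a, π ((φ ^ i) (b : ZMod n)) : ℕ) : ZMod (orderOf φ)) := by
  intro b
  induction b with
  | zero =>
      intro a
      have hterm : ∀ i ∈ Finset.range a, π ((φ ^ i) ((0 : ℕ) : ZMod n)) = π 0 := by
        intro i _
        rw [Nat.cast_zero, pf_zero hπ]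
      rw [pow_zero, Finset.sum_congr rfl hterm, Finset.sum_const, Finset.card_range,
        smul_eq_mul, Nat.cast_mul, pf_pi0_cast hπ, mul_one]
      rfl
  | succ b ih =>
      intro a
      have h1 : (ψ ^ (b+1)) ((a : ℕ) : ZMod (orderOf φ)) = (ψ ^ b) (ψ (a : ZMod (orderOf φ))) := by
        rw [pow_succ, Equiv.Perm.mul_apply]
      rw [h1, hψ a, ih]
      have hc : ((b + 1 : ℕ) : ZMod n) = (1 : ZMod n) + (b : ℕ) := by
        push_cast; ring
      rw [hc]
      exact (pf_sigma_assoc hπ a 1 ((b : ℕ) : ZMod n)).symm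

lemma pf_claim2 (hπ : IsPowerFunctionAdd φ π) (ψ : Equiv.Perm (ZMod (orderOf φ)))
    (hψ : ∀ a : ℕ, ψ (a : ZMod (orderOf φ)) =
      ((∑ i ∈ Finset.range a, π ((φ ^ i) 1) : ℕ) : ZMod (orderOf φ))) :
    ∀ i : ℕ, ((π ((i : ℕ) : ZMod n) : ℕ) : ZMod (orderOf φ)) = (ψ ^ i) 1 := by
  intro i
  induction i with
  | zero =>
      rw [Nat.cast_zero, pf_pi0_cast hπ, pow_zero]
      rfl
  | succ i ih =>
      have h := pf_sigma_assoc hπ 1 ((i : ℕ) : ZMod n) 1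
      simp only [Finset.sum_range_one, pow_zero, Equiv.Perm.coe_one, id_eq] at h
      have hc : ((i + 1 : ℕ) : ZMod n) = ((i : ℕ) : ZMod n) + 1 := by push_cast; ring
      rw [hc, h, ← hψ (π ((i : ℕ) : ZMod n)), ih, ← Equiv.Perm.mul_apply, ← pow_succ']


lemma pf_order (hn : 0 < n) (hπ : IsPowerFunctionAdd φ π) (ψ : Equiv.Perm (ZMod (orderOf φ)))
    (hψ : ∀ a : ℕ, ψ (a : ZMod (orderOf φ)) =
      ((∑ i ∈ Finset.range a, π ((φ ^ i) 1) : ℕ) : ZMod (orderOf φ))) :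
    orderOf ψ = n / Nat.card {a : ZMod n // ∀ b : ZMod n, φ (a + b) = φ a + φ b} := by
  haveI : NeZero n := ⟨hn.ne'⟩
  haveI : NeZero (orderOf φ) := ⟨(orderOf_pos φ).ne'⟩
  have c1 := pf_claim1 hπ ψ hψ
  have c2 := pf_claim2 hπ ψ hψ
  have hψn : (ψ ^ n) (1 : ZMod (orderOf φ)) = 1 := by
    have h := c1 n 1
    rw [Nat.cast_one] at h
    rw [h]
    simp only [Finset.sum_range_one, pow_zero, Equiv.Perm.coe_one, id_eq, ZMod.natCast_self]
    exact pf_pi0_cast hπ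
  set t := Function.minimalPeriod ψ 1 with ht
  have hiff : ∀ a : ℕ, Function.IsPeriodicPt ψ a 1 ↔ (ψ ^ a) 1 = 1 := fun a => Iff.rfl
  have hdvd : ∀ a : ℕ, (ψ ^ a) 1 = 1 ↔ t ∣ a := by
    intro a
    rw [← hiff, ht, ← Function.isPeriodicPt_iff_minimalPeriod_dvd]
  have htpos : 0 < t :=
    Function.minimalPeriod_pos_of_mem_periodicPts ⟨n, hn, (hiff n).mpr hψn⟩
  have htn : t ∣ n := (hdvd n).mp hψn
  set P : ZMod n → Prop := fun a => ∀ b : ZMod n, φ (a + b) = φ a + φ b with hPdef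
  have hPpow : ∀ x, P x ↔ φ ^ (π x) = φ := by
    intro x
    constructor
    · intro h
      ext b
      exact (add_left_cancel ((h b).symm.trans (hπ.2 x b))).symm
    · intro h b
      rw [hπ.2 x b, h]
  have hP1 : ∀ x, P x ↔ ((π x : ℕ) : ZMod (orderOf φ)) = 1 := by
    intro x
    rw [hPpow x]
    constructor
    · intro h
      have h2 : φ ^ π x = φ ^ 1 := by rw [h, pow_one]
      have h3 := (ZMod.natCast_eq_natCast_iff _ _ _).mpr (pow_eq_pow_iff_modEq.mp h2)
      simpa using h3
    · intro h
      have h2 : ((π x : ℕ) : ZMod (orderOf φ)) = ((1 : ℕ) : ZMod (orderOf φ)) := by simpa using h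
      have h3 := pow_eq_pow_iff_modEq.mpr ((ZMod.natCast_eq_natCast_iff _ _ _).mp h2)
      rwa [pow_one] at h3
  have hval : ∀ x : ZMod n, P x ↔ t ∣ x.val := by
    intro x
    rw [hP1 x]
    have hx : ((x.val : ℕ) : ZMod n) = x := ZMod.natCast_rightInverse x
    have hpix : ((π x : ℕ) : ZMod (orderOf φ)) = (ψ ^ x.val) 1 := by
      conv_lhs => rw [← hx]
      exact c2 x.val
    rw [hpix, hdvd]
  have hnt : t * (n / t) = n := Nat.mul_div_cancel' htn
  have hcard : Nat.card {a : ZMod n // ∀ b : ZMod n, φ (a + b) = φ a + φ b} = n / t := by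
    have hlt : ∀ j : Fin (n / t), t * (j : ℕ) < n := by
      intro j
      calc t * (j : ℕ) < t * (n / t) := (Nat.mul_lt_mul_left htpos).mpr j.2
        _ = n := hnt
    have hb : Function.Bijective (fun k : Fin (n / t) =>
        (⟨((t * (k : ℕ) : ℕ) : ZMod n), (hval _).mpr (by
          rw [ZMod.val_natCast]
          exact (Nat.dvd_mod_iff htn).mpr ⟨(k : ℕ), rfl⟩)⟩ :
          {a : ZMod n // ∀ b : ZMod n, φ (a + b) = φ a + φ b})) := by
      constructor
      · intro k k' h
        have h2 := congrArg (fun z => ZMod.val z.val) h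
        simp only [ZMod.val_natCast] at h2
        rw [Nat.mod_eq_of_lt (hlt k), Nat.mod_eq_of_lt (hlt k')] at h2
        exact Fin.ext (Nat.eq_of_mul_eq_mul_left htpos h2)
      · rintro ⟨a, ha⟩
        obtain ⟨c, hc⟩ := (hval a).mp ha
        have hc' : c < n / t := by
          have h1 : a.val < n := a.val_lt
          by_contra hle
          push_neg at hle
          have h2 : n ≤ t * c := by
            calc n = t * (n / t) := hnt.symm
              _ ≤ t * c := Nat.mul_le_mul_left t hle
          omega
        refine ⟨⟨c, hc'⟩, ?_⟩
        apply Subtype.ext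
        show ((t * c : ℕ) : ZMod n) = a
        rw [← hc]
        exact ZMod.natCast_rightInverse a
    calc Nat.card {a : ZMod n // ∀ b : ZMod n, φ (a + b) = φ a + φ b}
        = Nat.card (Fin (n / t)) := (Nat.card_eq_of_bijective _ hb).symm
      _ = n / t := by simp
  -- kernel is invariant under φ
  have hP0 : P 0 := by
    intro b
    rw [zero_add, hπ.1, zero_add]
  have hPadd : ∀ a b : ZMod n, P a → P b → P (a + b) := by
    intro a b ha hb c
    rw [add_assoc, ha (b + c), hb c, ha b, add_assoc]
  have haddc : ∀ x ∈ φ '' {a | P a}, ∀ y ∈ φ '' {a | P a}, x + y ∈ φ '' {a | P a} := by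
    rintro _ ⟨a, ha, rfl⟩ _ ⟨b, hb, rfl⟩
    exact ⟨a + b, hPadd a b ha hb, ha b⟩
  have h0 : (0 : ZMod n) ∈ φ '' {a | P a} := ⟨0, hP0, hπ.1⟩
  have hsmul : ∀ (k : ℕ) (x : ZMod n), x ∈ φ '' {a | P a} → k • x ∈ φ '' {a | P a} := by
    intro k
    induction k with
    | zero => intro x _; simpa using h0
    | succ k ih =>
        intro x hx
        rw [succ_nsmul]
        exact haddc _ (ih x hx) _ hx
  have hneg : ∀ x ∈ φ '' {a | P a}, -x ∈ φ '' {a | P a} := by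
    intro x hx
    have hpos : 0 < addOrderOf x := addOrderOf_pos x
    have h1 : (addOrderOf x - 1) • x + x = 0 := by
      have h2 : addOrderOf x • x = 0 := addOrderOf_nsmul_eq_zero x
      rw [← Nat.succ_pred_eq_of_pos hpos, succ_nsmul] at h2
      exact h2
    have h3 : -x = (addOrderOf x - 1) • x := by
      rw [neg_eq_iff_add_eq_zero]
      rw [add_comm]
      exact h1
    rw [h3]
    exact hsmul _ x hx
  set SG : AddSubgroup (ZMod n) :=
    { carrier := φ '' {a | P a}
      add_mem' := fun hx hy => haddc _ hx _ hy
      zero_mem' := h0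
      neg_mem' := fun hx => hneg _ hx } with hSG
  have hSGcard : Nat.card SG = n / t := by
    have h1 : Nat.card SG = Nat.card (φ '' {a | P a} : Set (ZMod n)) := rfl
    rw [h1, Nat.card_image_of_injective φ.injective, ← hcard]
    rfl
  have hker : ∀ x : ZMod n, x ∈ φ '' {a | P a} → P x := by
    intro x hx
    have hx0 : (n / t) • (⟨x, hx⟩ : SG) = 0 := by
      rw [← hSGcard]
      exact card_nsmul_eq_zero'
    have hx1 : (n / t) • x = 0 := by
      have := congrArg (Subtype.val) hx0
      simpa using this
    rw [hval]
    have hc : (((n / t) * x.val : ℕ) : ZMod n) = 0 := by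
      rw [Nat.cast_mul, ZMod.natCast_rightInverse x, ← nsmul_eq_mul]
      exact hx1
    have hdvd2 : n ∣ (n / t) * x.val := (ZMod.natCast_eq_zero_iff _ _).mp hc
    have hnt' : (n / t) * t = n := Nat.div_mul_cancel htn
    have hdvd3 : (n / t) * t ∣ (n / t) * x.val := by rw [hnt']; exact hdvd2
    have hpos : 0 < n / t := Nat.div_pos (Nat.le_of_dvd hn htn) htpos
    exact (Nat.mul_dvd_mul_iff_left hpos).mp hdvd3
  have hinv : ∀ x : ZMod n, P x → P (φ x) := fun x hx => hker (φ x) ⟨x, hx, rfl⟩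
  have hiter : ∀ i : ℕ, P ((φ ^ i) ((t : ℕ) : ZMod n)) := by
    intro i
    induction i with
    | zero =>
        rw [pow_zero]
        show P (((t : ℕ) : ZMod n))
        rw [hval, ZMod.val_natCast]
        exact (Nat.dvd_mod_iff htn).mpr dvd_rfl
    | succ i ih =>
        rw [pow_succ', Equiv.Perm.mul_apply]
        exact hinv _ ih
  have hψt : ψ ^ t = 1 := by
    ext x
    have h := c1 t x.val
    have hx : ((x.val : ℕ) : ZMod (orderOf φ)) = x := ZMod.natCast_rightInverse x
    rw [hx] at h
    rw [h, Nat.cast_sum]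
    have hterm : ∀ i ∈ Finset.range x.val,
        ((π ((φ ^ i) ((t : ℕ) : ZMod n)) : ℕ) : ZMod (orderOf φ)) = 1 :=
      fun i _ => (hP1 _).mp (hiter i)
    rw [Finset.sum_congr rfl hterm, Finset.sum_const, Finset.card_range, nsmul_eq_mul, mul_one]
    simpa using hx
  have hto : orderOf ψ ∣ t := orderOf_dvd_of_pow_eq_one hψt
  have hot : t ∣ orderOf ψ := (hdvd (orderOf ψ)).mp (by rw [pow_orderOf_eq_one]; rfl)
  rw [hcard, Nat.dvd_antisymm hto hot, Nat.div_div_self htn hn.ne']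

end Aux

/-- For a non-trivial skew morphism `φ` of `Z_n` with derived skew morphism `ψ = φ′`:
`(φ′)^b(a) = σ_φ(a,b)`, `π_φ(i) = (φ′)^i(1)`, and `ord(φ′) = n/|ker φ|`. -/
theorem derived_properties (n : ℕ) (hn : 0 < n) (φ : Equiv.Perm (ZMod n))
    (hφne : φ ≠ 1) (π : ZMod n → ℕ) (hπ : IsPowerFunctionAdd φ π)
    (ψ : Equiv.Perm (ZMod (orderOf φ)))
    (hψ : ∀ a : ℕ, ψ (a : ZMod (orderOf φ)) =
      ((∑ i ∈ Finset.range a, π ((φ ^ i) 1) : ℕ) : ZMod (orderOf φ))) :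
    (∀ a b : ℕ, (ψ ^ b) (a : ZMod (orderOf φ)) =
        ((∑ i ∈ Finset.range a, π ((φ ^ i) (b : ZMod n)) : ℕ) : ZMod (orderOf φ))) ∧
    (∀ i : ℕ, ((π (i : ZMod n) : ℕ) : ZMod (orderOf φ)) = (ψ ^ i) (1 : ZMod (orderOf φ))) ∧
    orderOf ψ = n / Nat.card {a : ZMod n // ∀ b : ZMod n, φ (a + b) = φ a + φ b} := by
  exact ⟨fun a b => pf_claim1 hπ ψ hψ b a, pf_claim2 hπ ψ hψ, pf_order hn hπ ψ hψ⟩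
end

section
/- Let φ be a skew morphism of Z_n with even complexity and auto-order m. Then m divides n, and φ taken modulo m is the trivial permutation of Z_m (i.e., φ(x) ≡ x (mod m) for all x ∈ Z_n). -/
/-- A skew morphism of a finite cyclic group, bundled with its modulus. -/
structure SkewCyc where
  n : ℕ
  perm : Equiv.Perm (ZMod n)
  skew : IsSkewMorphismAdd perm

/-- `B` is the derived skew morphism of `A`: it is a skew morphism of
`Z_{ord(A)}` given by `a ↦ σ_A(a,1)`. -/
def Derives (A B : SkewCyc) : Prop :=
  B.n = orderOf A.perm ∧ ∃ π : ZMod A.n → ℕ, IsPowerFunctionAdd A.perm π ∧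
    ∀ a : ℕ, B.perm (a : ZMod B.n) =
      ((∑ i ∈ Finset.range a, π ((A.perm ^ i) 1) : ℕ) : ZMod B.n)

/-- The skew morphism `A` has complexity `c` and auto-order `m`: iterating the
derived-skew-morphism operation `c` times, through non-trivial skew morphisms,
first reaches the trivial permutation of a non-trivial cyclic group `Z_m`. -/
def HasComplexityAutoOrder (A : SkewCyc) (c m : ℕ) : Prop :=
  ∃ F : ℕ → SkewCyc, F 0 = A ∧ (∀ i < c, Derives (F i) (F (i + 1))) ∧
    (F c).n = m ∧ 2 ≤ m ∧ (F c).perm = 1 ∧ ∀ i < c, (F i).perm ≠ 1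

/-! ### Auxiliary material -/

namespace SkewAux

variable {N : ℕ}

/-- The "sigma" function `t k = σ(k, ·)` exponent: `t k = ∑_{i<k} π(φ^i 1)`. -/
def tfun (φ : Equiv.Perm (ZMod N)) (π : ZMod N → ℕ) : ℕ → ℕ :=
  fun a => ∑ i ∈ Finset.range a, π ((φ ^ i) 1)

theorem pf_zero {φ : Equiv.Perm (ZMod N)} {π : ZMod N → ℕ}
    (hπ : IsPowerFunctionAdd φ π) (k : ℕ) : (φ ^ k) (0 : ZMod N) = 0 := by
  induction k with
  | zero => simp
  | succ k ih => rw [pow_succ, Equiv.Perm.mul_apply, hπ.1, ih]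

theorem pf_iter_add {φ : Equiv.Perm (ZMod N)} {π : ZMod N → ℕ}
    (hπ : IsPowerFunctionAdd φ π) (k : ℕ) (a b : ZMod N) :
    (φ ^ k) (a + b) = (φ ^ k) a +
      (φ ^ (∑ j ∈ Finset.range k, π ((φ ^ j) a))) b := by
  induction k with
  | zero => simp
  | succ k ih =>
    have h1 : ∀ x : ZMod N, (φ ^ (k + 1)) x = φ ((φ ^ k) x) := by
      intro x; rw [pow_succ', Equiv.Perm.mul_apply]
    rw [h1, ih, hπ.2, h1, Finset.sum_range_succ]
    congr 1
    rw [← Equiv.Perm.mul_apply, ← pow_add, Nat.add_comm]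

theorem pf_exp_congr {φ : Equiv.Perm (ZMod N)} {A B : ℕ}
    (h : φ ^ A = φ ^ B) : A ≡ B [MOD orderOf φ] :=
  pow_eq_pow_iff_modEq.mp h

/-- sum of terms each ≡ 1 mod m is ≡ the number of terms. -/
theorem sum_one_mod {m : ℕ} {f : ℕ → ℕ} (b : ℕ) (h : ∀ j, f j ≡ 1 [MOD m]) :
    (∑ j ∈ Finset.range b, f j) ≡ b [MOD m] := by
  induction b with
  | zero => rfl
  | succ b ih =>
    rw [Finset.sum_range_succ]
    exact ih.add (h b)

/-- The "even-level" invariant: `m` divides the modulus and every power of the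
permutation is trivial mod `m`. -/
def SEven (m : ℕ) (X : SkewCyc) : Prop :=
  m ∣ X.n ∧ ∀ (k : ℕ) (b : ZMod X.n), ((X.perm ^ k) b).val ≡ b.val [MOD m]

/-- The "odd-level" invariant: `m` divides the order and some power function is
constantly `1` mod `m`. -/
def SOdd (m : ℕ) (X : SkewCyc) : Prop :=
  m ∣ orderOf X.perm ∧ ∃ π : ZMod X.n → ℕ,
    IsPowerFunctionAdd X.perm π ∧ ∀ y : ZMod X.n, π y ≡ 1 [MOD m]

theorem stepEO (m : ℕ) (A B : SkewCyc) (hApos : 0 < A.n) (hBpos : 0 < B.n)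
    (hA1 : A.perm ≠ 1) (hd : Derives A B) (hE : SEven m B) : SOdd m A := by
  obtain ⟨hBn, π, hπ, hψ⟩ := hd
  haveI : NeZero A.n := ⟨hApos.ne'⟩
  haveI : NeZero B.n := ⟨hBpos.ne'⟩
  refine ⟨hBn ▸ hE.1, π, hπ, ?_⟩
  -- π 0 ≡ 1
  have hπ0 : A.perm ^ (π 0) = A.perm ^ 1 := by
    apply Equiv.ext; intro b
    have h := hπ.2 0 b
    rw [hπ.1, zero_add, zero_add] at h
    rw [pow_one]; exact h.symm
  have hπ0' : π 0 ≡ 1 [MOD B.n] := hBn ▸ pf_exp_congr hπ0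
  -- step relation
  have hstep : ∀ x : ZMod A.n,
      A.perm ^ (π (x + 1)) = A.perm ^ (tfun A.perm π (π x)) := by
    intro x; apply Equiv.ext; intro cx
    have e1 := hπ.2 (x + 1) cx
    have e2 := hπ.2 x (1 + cx)
    have e3 := pf_iter_add hπ (π x) 1 cx
    have e4 := hπ.2 x 1
    have hx : x + 1 + cx = x + (1 + cx) := by ring
    rw [hx, e2, e3, ← add_assoc, ← e4] at e1
    exact (add_left_cancel e1).symm
  have hstepmod : ∀ x : ZMod A.n,
      π (x + 1) ≡ tfun A.perm π (π x) [MOD B.n] :=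
    fun x => hBn ▸ pf_exp_congr (hstep x)
  -- cast identity
  have key : ∀ a : ℕ,
      ((π ((a : ℕ) : ZMod A.n) : ℕ) : ZMod B.n) = (B.perm ^ a) (1 : ZMod B.n) := by
    intro a; induction a with
    | zero =>
      have := (ZMod.natCast_eq_natCast_iff _ _ _).mpr hπ0'
      simpa using this
    | succ a ih =>
      have h1 : ((a + 1 : ℕ) : ZMod A.n) = ((a : ℕ) : ZMod A.n) + 1 := by push_cast; ring
      rw [h1]
      have h2 : ((π (((a : ℕ) : ZMod A.n) + 1) : ℕ) : ZMod B.n)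
          = ((tfun A.perm π (π ((a : ℕ) : ZMod A.n)) : ℕ) : ZMod B.n) :=
        (ZMod.natCast_eq_natCast_iff _ _ _).mpr (hstepmod _)
      have h3 : ((tfun A.perm π (π ((a : ℕ) : ZMod A.n)) : ℕ) : ZMod B.n)
          = B.perm ((π ((a : ℕ) : ZMod A.n) : ℕ) : ZMod B.n) := (hψ _).symm
      rw [h2, h3, ih, ← Equiv.Perm.mul_apply, ← pow_succ']
  -- conclude
  intro y
  have hy : ((y.val : ℕ) : ZMod A.n) = y := ZMod.natCast_rightInverse y
  have hkey := key y.val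
  rw [hy] at hkey
  have h1lt : 1 < B.n := by
    rcases Nat.lt_or_ge 1 B.n with h | h
    · exact h
    · exfalso
      have hB1 : B.n = 1 := le_antisymm h hBpos
      apply hA1
      apply orderOf_eq_one_iff.mp
      rw [← hBn, hB1]
  haveI : Fact (1 < B.n) := ⟨h1lt⟩
  have hv : (π y) % B.n = ((B.perm ^ y.val) (1 : ZMod B.n)).val := by
    rw [← ZMod.val_natCast, hkey]
  have hE2 := hE.2 y.val (1 : ZMod B.n)
  rw [ZMod.val_one] at hE2
  calc π y ≡ π y % B.n [MOD m] :=
        ((Nat.mod_modEq (π y) B.n).symm).of_dvd hE.1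
    _ = ((B.perm ^ y.val) (1 : ZMod B.n)).val := hv
    _ ≡ 1 [MOD m] := hE2

theorem stepOE (m : ℕ) (A B : SkewCyc) (hApos : 0 < A.n) (hBpos : 0 < B.n)
    (hd : Derives A B) (hO : SOdd m B) : SEven m A := by
  obtain ⟨hBn, π, hπ, hψ⟩ := hd
  obtain ⟨hmord, π', hπ', hπ'1⟩ := hO
  haveI : NeZero A.n := ⟨hApos.ne'⟩
  haveI : NeZero B.n := ⟨hBpos.ne'⟩
  set t : ℕ → ℕ := tfun A.perm π with ht
  have hψ' : ∀ a : ℕ, B.perm ((a : ℕ) : ZMod B.n) = ((t a : ℕ) : ZMod B.n) := hψ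
  -- sliding lemma
  have slide : ∀ (a j : ℕ) (y : ZMod A.n),
      (A.perm ^ j) (((a : ℕ) : ZMod A.n) + y)
        = (A.perm ^ j) ((a : ℕ) : ZMod A.n) + (A.perm ^ (t^[a] j)) y := by
    intro a
    induction a with
    | zero =>
      intro j y
      simp [pf_zero hπ]
    | succ a ih =>
      intro j y
      have hc : ((a + 1 : ℕ) : ZMod A.n) = 1 + ((a : ℕ) : ZMod A.n) := by push_cast; ring
      have e1 : ∀ z : ZMod A.n, (A.perm ^ j) (1 + z)
          = (A.perm ^ j) 1 + (A.perm ^ (t j)) z := by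
        intro z
        have h := pf_iter_add hπ j (1 : ZMod A.n) z
        exact h
      rw [hc, add_assoc, e1, ih (t j) y, e1, Function.iterate_succ_apply, add_assoc]
  -- ψ powers on casts
  have hpsipow : ∀ (a k : ℕ),
      (B.perm ^ a) ((k : ℕ) : ZMod B.n) = ((t^[a] k : ℕ) : ZMod B.n) := by
    intro a
    induction a with
    | zero => intro k; simp
    | succ a ih =>
      intro k
      rw [Function.iterate_succ_apply, ← ih (t k), ← hψ' k,
        ← Equiv.Perm.mul_apply, ← pow_succ]
  -- m ∣ A.n
  have hiterN : ∀ j : ℕ, t^[A.n] j ≡ j [MOD B.n] := by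
    intro j
    have h : A.perm ^ (t^[A.n] j) = A.perm ^ j := by
      apply Equiv.ext; intro y
      have h := slide A.n j y
      rw [ZMod.natCast_self, zero_add, pf_zero hπ, zero_add] at h
      exact h.symm
    exact hBn ▸ pf_exp_congr h
  have hpsiN : B.perm ^ A.n = 1 := by
    apply Equiv.ext; intro x
    have hx : ((x.val : ℕ) : ZMod B.n) = x := ZMod.natCast_rightInverse x
    rw [← hx, hpsipow, (ZMod.natCast_eq_natCast_iff _ _ _).mpr (hiterN x.val)]
    simp
  have hdvdAn : m ∣ A.n := dvd_trans hmord (orderOf_dvd_of_pow_eq_one hpsiN)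
  -- key0
  have key0 : ∀ (y b : ℕ), t^[b] y ≡
      (∑ j ∈ Finset.range y, π ((A.perm ^ j) ((b : ℕ) : ZMod A.n))) [MOD B.n] := by
    intro y b
    have h : A.perm ^ (t^[b] y)
        = A.perm ^ (∑ j ∈ Finset.range y, π ((A.perm ^ j) ((b : ℕ) : ZMod A.n))) := by
      apply Equiv.ext; intro z
      have h1 := slide b y z
      have h2 := pf_iter_add hπ y ((b : ℕ) : ZMod A.n) z
      exact add_left_cancel (h1.symm.trans h2)
    exact hBn ▸ pf_exp_congr h
  -- main congruence
  have main : ∀ (k b : ℕ), ((A.perm ^ k) ((b : ℕ) : ZMod A.n)).val ≡ b [MOD m] := by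
    intro k b
    set c : ℕ := ((A.perm ^ k) ((b : ℕ) : ZMod A.n)).val with hcdef
    set s : ℕ := ∑ j ∈ Finset.range k, π ((A.perm ^ j) ((b : ℕ) : ZMod A.n)) with hsdef
    have hcast : ((c : ℕ) : ZMod A.n) = (A.perm ^ k) ((b : ℕ) : ZMod A.n) :=
      ZMod.natCast_rightInverse _
    -- arithmetic identity
    have ha : ∀ x0 : ℕ, t^[b] (k + x0) ≡ s + t^[c] x0 [MOD B.n] := by
      intro x0
      have h1 := key0 (k + x0) b
      have h2 : (∑ j ∈ Finset.range (k + x0), π ((A.perm ^ j) ((b : ℕ) : ZMod A.n)))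
          = s + ∑ j ∈ Finset.range x0, π ((A.perm ^ j) ((c : ℕ) : ZMod A.n)) := by
        rw [Finset.sum_range_add]
        congr 1
        apply Finset.sum_congr rfl
        intro j _
        congr 1
        rw [hcast, ← Equiv.Perm.mul_apply, ← pow_add, Nat.add_comm k j]
      rw [h2] at h1
      exact h1.trans (Nat.ModEq.add_left s (key0 x0 c).symm)
    -- lift to ψ
    have hb : ∀ x : ZMod B.n,
        (B.perm ^ b) (((k : ℕ) : ZMod B.n) + x)
          = (B.perm ^ c) x + ((s : ℕ) : ZMod B.n) := by
      intro x
      have hx : ((x.val : ℕ) : ZMod B.n) = x := ZMod.natCast_rightInverse x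
      have h1 : ((k : ℕ) : ZMod B.n) + x = ((k + x.val : ℕ) : ZMod B.n) := by
        rw [Nat.cast_add, hx]
      rw [h1, hpsipow, (ZMod.natCast_eq_natCast_iff _ _ _).mpr (ha x.val),
        Nat.cast_add, ← hpsipow c x.val, hx]
      exact add_comm _ _
    -- extraction
    have e1 : ∀ x : ZMod B.n,
        (B.perm ^ b) (((k : ℕ) : ZMod B.n) + x)
          = (B.perm ^ b) ((k : ℕ) : ZMod B.n)
            + (B.perm ^ (∑ j ∈ Finset.range b, π' ((B.perm ^ j) ((k : ℕ) : ZMod B.n)))) x :=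
      fun x => pf_iter_add hπ' b _ x
    set E : ℕ := ∑ j ∈ Finset.range b, π' ((B.perm ^ j) ((k : ℕ) : ZMod B.n)) with hEdef
    have hEb : E ≡ b [MOD m] := sum_one_mod b (fun j => hπ'1 _)
    have hs1 : (B.perm ^ b) ((k : ℕ) : ZMod B.n) = ((s : ℕ) : ZMod B.n) := by
      have h0 := hb 0
      rwa [add_zero, pf_zero hπ', zero_add] at h0
    have hEc : B.perm ^ E = B.perm ^ c := by
      apply Equiv.ext; intro x
      have l := e1 x
      rw [hb x, hs1] at l
      -- l : ψ^c x + ↑s = ↑s + ψ^E x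
      have l2 : (B.perm ^ c) x + ((s : ℕ) : ZMod B.n)
          = (B.perm ^ E) x + ((s : ℕ) : ZMod B.n) := l.trans (add_comm _ _)
      exact (add_right_cancel l2).symm
    have hEc' : E ≡ c [MOD m] := (pf_exp_congr hEc).of_dvd hmord
    exact hEc'.symm.trans hEb
  refine ⟨hdvdAn, fun k b => ?_⟩
  have h := main k b.val
  rw [ZMod.natCast_rightInverse b] at h
  exact h

end SkewAux

/-- If `φ` has even complexity and auto-order `m`, then `m ∣ n` and `φ` taken modulo
`m` is the trivial permutation of `Z_m`, i.e. `φ(x) ≡ x (mod m)` for all `x ∈ Z_n`. -/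
theorem even_complexity_mod_trivial (n c m : ℕ) (hn : 0 < n)
    (φ : Equiv.Perm (ZMod n)) (hskew : IsSkewMorphismAdd φ)
    (hcm : HasComplexityAutoOrder ⟨n, φ, hskew⟩ c m) (hceven : Even c) :
    m ∣ n ∧ ∀ x : ZMod n, (((φ x).val : ZMod m)) = ((x.val : ZMod m)) := by
  obtain ⟨F, hF0, hder, hFcn, hm2, hFc1, hnt⟩ := hcm
  -- positivity of all moduli along the chain
  have hpos : ∀ i, i ≤ c → 0 < (F i).n := by
    intro i
    induction i with
    | zero =>
      intro _
      rw [hF0]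
      exact hn
    | succ i ih =>
      intro hic
      have hic' : i < c := Nat.lt_of_succ_le hic
      obtain ⟨hBn, -⟩ := hder i hic'
      rw [hBn]
      have hpi := ih hic'.le
      haveI : NeZero (F i).n := ⟨hpi.ne'⟩
      exact orderOf_pos _
  have main : ∀ d, d ≤ c →
      (Even d → SkewAux.SEven m (F (c - d))) ∧
      (¬ Even d → SkewAux.SOdd m (F (c - d))) := by
    intro d
    induction d with
    | zero =>
      intro _
      rw [Nat.sub_zero]
      constructor
      · intro _
        refine ⟨by rw [hFcn], fun k b => ?_⟩
        rw [hFc1, one_pow, Equiv.Perm.one_apply]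
      · intro h; exact absurd Even.zero h
    | succ d ih =>
      intro hdc
      have hdc' : d ≤ c := Nat.le_of_succ_le hdc
      have ihd := ih hdc'
      have hi : c - (d + 1) < c := by omega
      have hii : c - (d + 1) + 1 = c - d := by omega
      have hder' := hder _ hi
      rw [hii] at hder'
      constructor
      · intro hev
        have hodd : ¬ Even d := Nat.even_add_one.mp hev
        exact SkewAux.stepOE m _ _ (hpos _ (by omega)) (hpos _ (by omega))
          hder' (ihd.2 hodd)
      · intro hnev
        have hev : Even d := by
          by_contra h
          exact hnev (Nat.even_add_one.mpr h)
        exact SkewAux.stepEO m _ _ (hpos _ (by omega)) (hpos _ (by omega))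
          (hnt _ hi) hder' (ihd.1 hev)
  have hfin := (main c le_rfl).1 hceven
  rw [Nat.sub_self, hF0] at hfin
  obtain ⟨hdvd, hcong⟩ := hfin
  refine ⟨hdvd, fun x => ?_⟩
  have h := hcong 1 x
  rw [pow_one] at h
  exact (ZMod.natCast_eq_natCast_iff _ _ _).mpr h
end
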